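/- Let $q$ be a prime power with $q \bmod n \in D_0$ (the principal Whiteman class of order 6 modulo $n = n_1 n_2$), and let $d_j(x) = \prod_{i \in D_j}(x - \beta^i)$ for $0 \le j \le 5$, where $\beta$ is a primitive $n$-th root of unity in $\mathrm{GF}(q^m)$, $m$ the order of $q$ mod $n$. Then each $d_j(x)$ has all coefficients in $\mathrm{GF}(q)$, and $x^n - 1 = \frac{(x^{n_1}-1)(x^{n_2}-1)}{x-1} \prod_{j=0}^{5} d_j(x)$ over $\mathrm{GF}(q)$. -/

import Mathlib

/-!
The Frobenius `a ↦ a ^ q` of `K` over `F` sends `β ^ i` to `β ^ (q i mod n)`, and multiplication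
by `q ∈ D₀` permutes each class `D_j`; so Frobenius fixes every `d_j` coefficientwise, and the
fixed points of Frobenius are exactly `F`. For the factorization, the residues `g ^ s x ^ j`
(`s < φ(n) / 6`, `j < 6`) are pairwise distinct units, so the classes partition `(ℤ/n)ˣ` and
`∏ d_j = Φ_n`; finally `X ^ n - 1 = Φ₁ Φ_{n₁} Φ_{n₂} Φ_n`.
-/

open Finset Polynomial

/-- The Whiteman generalized cyclotomic class `D_i` of order 6 modulo `n = n1 * n2`,
given a common primitive root `g` and the CRT element `x`. -/
def whitemanD (n1 n2 g x : ℕ) (i : ℕ) : Finset ℕ :=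
  (Finset.range ((n1 - 1) * (n2 - 1) / 6)).image (fun s => g ^ s * x ^ i % (n1 * n2))

/-- The set `{k * a : 1 ≤ k ≤ b - 1}` of nonzero multiples of `a` below `a * b`. -/
def multSet (a b : ℕ) : Finset ℕ :=
  (Finset.Icc 1 (b - 1)).image (fun k => k * a)

theorem FiniteField.mem_range_algebraMap_of_pow_card_eq_self (F : Type*) {K : Type*} [Field F]
    [Fintype F] [Field K] [Algebra F K] {a : K} (ha : a ^ Fintype.card F = a) :
    a ∈ Set.range (algebraMap F K) := by
  have hq : 1 < Fintype.card F := Fintype.one_lt_card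
  have hsplit : (X ^ Fintype.card F - X : F[X]).Splits := by
    rw [splits_iff_card_roots, roots_X_pow_card_sub_X, ← Finset.card_def, Finset.card_univ,
      X_pow_card_sub_X_natDegree_eq _ hq]
  refine hsplit.mem_range_of_isRoot (X_pow_card_sub_X_ne_zero _ hq) ?_
  simp [ha]

theorem Finset.prod_mul_mod_eq {M : Type*} [CommMonoid M] (f : ℕ → M) {n q : ℕ}
    (hq : q.Coprime n) {S : Finset ℕ} (hSn : ∀ i ∈ S, i < n) (hSq : ∀ i ∈ S, q * i % n ∈ S) :
    ∏ i ∈ S, f (q * i % n) = ∏ i ∈ S, f i := by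
  have hinj : Set.InjOn (fun i => q * i % n) S := fun i hi j hj hij =>
    Nat.ModEq.eq_of_lt_of_lt (Nat.ModEq.cancel_left_of_coprime (by simpa using hq.symm) hij)
      (hSn i hi) (hSn j hj)
  exact prod_nbij _ hSq hinj (surjOn_of_injOn_of_card_le _ hSq hinj le_rfl) fun _ _ => rfl

theorem coeff_prod_X_sub_C_pow_mem_range (F : Type*) {K : Type*} [Field F] [Fintype F] [Field K]
    [Algebra F K] {β : K} {n : ℕ} (hβ : β ^ n = 1) (hq : (Fintype.card F).Coprime n)
    {S : Finset ℕ} (hSn : ∀ i ∈ S, i < n) (hSq : ∀ i ∈ S, Fintype.card F * i % n ∈ S) (k : ℕ) :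
    (∏ i ∈ S, (X - C (β ^ i))).coeff k ∈ Set.range (algebraMap F K) := by
  set φ : K →+* K := (FiniteField.frobeniusAlgHom F K).toRingHom
  have hφ : ∀ a, φ a = a ^ Fintype.card F := fun _ => rfl
  have hfix : (∏ i ∈ S, (X - C (β ^ i))).map φ = ∏ i ∈ S, (X - C (β ^ i)) := by
    simp only [Polynomial.map_prod, Polynomial.map_sub, map_X, map_C, hφ, ← pow_mul]
    rw [← prod_mul_mod_eq (fun i => X - C (β ^ i)) hq hSn hSq]
    refine prod_congr rfl fun i _ => ?_
    rw [mul_comm, ← pow_eq_pow_mod _ hβ]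
  apply FiniteField.mem_range_algebraMap_of_pow_card_eq_self F
  rw [← hφ, ← coeff_map, hfix]

theorem IsPrimitiveRoot.cyclotomic_eq_prod_coprime {K : Type*} [CommRing K] [IsDomain K] {β : K}
    {n : ℕ} (hβ : IsPrimitiveRoot β n) :
    cyclotomic n K = ∏ i ∈ range n with n.Coprime i, (X - C (β ^ i)) := by
  rcases n.eq_zero_or_pos with rfl | hn
  · simp
  have : NeZero n := .of_pos hn
  rw [cyclotomic_eq_prod_X_sub_primitiveRoots hβ]
  symm
  refine prod_nbij (β ^ ·) (fun i hi => ?_) (fun i hi j hj hij => ?_) (fun μ hμ => ?_)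
    fun _ _ => rfl
  · simp only [mem_filter, mem_range] at hi
    exact (mem_primitiveRoots hn).mpr (hβ.pow_of_coprime i hi.2.symm)
  · simp only [coe_filter, mem_range, Set.mem_ofPred_eq] at hi hj
    exact hβ.pow_inj hi.1 hj.1 hij
  · have hμ := (mem_primitiveRoots hn).mp hμ
    obtain ⟨i, hi, rfl⟩ := hβ.eq_pow_of_pow_eq_one hμ.pow_eq_one
    exact ⟨i, by simpa [hi, Nat.coprime_comm] using (hβ.pow_iff_coprime hn i).mp hμ, rfl⟩

-- Expanding `Φ_p (X - 1) = X ^ p - 1` by `X ↦ X ^ q` gives `Φ_{pq} Φ_p (X ^ q - 1) = X ^ (pq) - 1`.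
theorem X_sub_one_mul_X_pow_mul_sub_one (R : Type*) [CommRing R] {p q : ℕ} (hp : p.Prime)
    (hq : q.Prime) (hpq : p ≠ q) :
    (X - 1) * (X ^ (p * q) - 1 : R[X]) = (X ^ p - 1) * (X ^ q - 1) * cyclotomic (p * q) R := by
  have := Fact.mk hp
  have hΦp := cyclotomic_prime_mul_X_sub_one R p
  have hexp := congrArg (expand R q) hΦp
  rw [map_mul, cyclotomic_expand_eq_cyclotomic_mul hq
    ((Nat.prime_dvd_prime_iff_eq hq hp).not.mpr hpq.symm)] at hexp
  simp only [map_sub, map_pow, expand_X, map_one, ← pow_mul] at hexp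
  linear_combination (X - 1) * hexp.symm + (X ^ q - 1) * cyclotomic (p * q) R * hΦp

section Whiteman

variable {n1 n2 g x : ℕ}

theorem whitemanPeriod_eq_lcm (hgcd : Nat.gcd (n1 - 1) (n2 - 1) = 6) :
    (n1 - 1) * (n2 - 1) / 6 = Nat.lcm (n1 - 1) (n2 - 1) := by
  have := Nat.gcd_mul_lcm (n1 - 1) (n2 - 1)
  rw [hgcd] at this
  omega

theorem one_lt_of_lt_whitemanPeriod {s : ℕ} (hs : s < (n1 - 1) * (n2 - 1) / 6) :
    1 < n1 ∧ 1 < n2 := by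
  constructor <;> by_contra! h <;> simp [Nat.sub_eq_zero_of_le h] at hs

theorem lt_of_mem_whitemanD {i j : ℕ} (hi : i ∈ whitemanD n1 n2 g x j) : i < n1 * n2 := by
  obtain ⟨s, hs, rfl⟩ := mem_image.mp hi
  obtain ⟨h1, h2⟩ := one_lt_of_lt_whitemanPeriod (mem_range.mp hs)
  exact Nat.mod_lt _ (by positivity)

/-- The representation `g ^ s * x ^ j` is unique: modulo `n2` it sees `s` modulo `n2 - 1`,
modulo `n1` it sees `s + j` modulo `n1 - 1`, and `6` divides both moduli. -/
theorem eq_and_eq_of_pow_mul_pow_modEq (hgcd : Nat.gcd (n1 - 1) (n2 - 1) = 6)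
    (hg1 : orderOf (g : ZMod n1) = n1 - 1) (hg2 : orderOf (g : ZMod n2) = n2 - 1)
    (hx1 : x % n1 = g % n1) (hx2 : x % n2 = 1 % n2) {s t j j' : ℕ}
    (hs : s < (n1 - 1) * (n2 - 1) / 6) (ht : t < (n1 - 1) * (n2 - 1) / 6) (hj : j < 6)
    (hj' : j' < 6) (h : g ^ s * x ^ j ≡ g ^ t * x ^ j' [MOD n1 * n2]) : s = t ∧ j = j' := by
  obtain ⟨hn1, hn2⟩ := one_lt_of_lt_whitemanPeriod hs
  have hfin1 : IsOfFinOrder (g : ZMod n1) := orderOf_pos_iff.mp (by omega)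
  have hfin2 : IsOfFinOrder (g : ZMod n2) := orderOf_pos_iff.mp (by omega)
  have hxg : (x : ZMod n1) = g := (ZMod.natCast_eq_natCast_iff' _ _ _).mpr hx1
  have hx1' : (x : ZMod n2) = 1 := by
    simpa using (ZMod.natCast_eq_natCast_iff' x 1 n2).mpr hx2
  have h1 : s + j ≡ t + j' [MOD n1 - 1] := by
    rw [← hg1, ← hfin1.pow_eq_pow_iff_modEq]
    have := (ZMod.natCast_eq_natCast_iff _ _ _).mpr (h.of_mul_right n2)
    push_cast [hxg] at this
    simpa only [pow_add] using this
  have h2 : s ≡ t [MOD n2 - 1] := by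
    rw [← hg2, ← hfin2.pow_eq_pow_iff_modEq]
    have := (ZMod.natCast_eq_natCast_iff _ _ _).mpr (h.of_mul_left n1)
    push_cast [hx1'] at this
    simpa using this
  have h61 : 6 ∣ n1 - 1 := hgcd ▸ Nat.gcd_dvd_left _ _
  have h62 : 6 ∣ n2 - 1 := hgcd ▸ Nat.gcd_dvd_right _ _
  obtain rfl : j = j' :=
    ((h2.of_dvd h62).add_left_cancel (h1.of_dvd h61)).eq_of_lt_of_lt hj hj'
  refine ⟨?_, rfl⟩
  have hst : s ≡ t [MOD Nat.lcm (n1 - 1) (n2 - 1)] := by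
    rw [← Int.natCast_modEq_iff, ← Int.lcm_natCast_natCast,
      ← Int.modEq_and_modEq_iff_modEq_lcm, Int.natCast_modEq_iff, Int.natCast_modEq_iff]
    exact ⟨h1.add_right_cancel' j, h2⟩
  rw [← whitemanPeriod_eq_lcm hgcd] at hst
  exact hst.eq_of_lt_of_lt hs ht

theorem natCast_pow_whitemanPeriod (hco : n1.Coprime n2) (hgcd : Nat.gcd (n1 - 1) (n2 - 1) = 6)
    (hg1 : orderOf (g : ZMod n1) = n1 - 1) (hg2 : orderOf (g : ZMod n2) = n2 - 1) :
    (g : ZMod (n1 * n2)) ^ ((n1 - 1) * (n2 - 1) / 6) = 1 := by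
  have hmod : ∀ {m e : ℕ}, orderOf (g : ZMod m) ∣ e → g ^ e ≡ 1 [MOD m] := fun hd => by
    rw [← ZMod.natCast_eq_natCast_iff]
    push_cast
    exact orderOf_dvd_iff_pow_eq_one.mp hd
  rw [← Nat.cast_pow, ← Nat.cast_one (R := ZMod (n1 * n2)), ZMod.natCast_eq_natCast_iff,
    ← Nat.modEq_and_modEq_iff_modEq_mul hco, whitemanPeriod_eq_lcm hgcd]
  exact ⟨hmod (hg1 ▸ Nat.dvd_lcm_left _ _), hmod (hg2 ▸ Nat.dvd_lcm_right _ _)⟩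

theorem mul_mod_mem_whitemanD (hco : n1.Coprime n2) (hgcd : Nat.gcd (n1 - 1) (n2 - 1) = 6)
    (hg1 : orderOf (g : ZMod n1) = n1 - 1) (hg2 : orderOf (g : ZMod n2) = n2 - 1) {q i j : ℕ}
    (hq : q % (n1 * n2) ∈ whitemanD n1 n2 g x 0) (hi : i ∈ whitemanD n1 n2 g x j) :
    q * i % (n1 * n2) ∈ whitemanD n1 n2 g x j := by
  simp only [whitemanD, mem_image, mem_range, pow_zero, mul_one] at hq hi ⊢
  obtain ⟨s0, -, hs0⟩ := hq
  obtain ⟨s, hs, rfl⟩ := hi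
  refine ⟨(s0 + s) % ((n1 - 1) * (n2 - 1) / 6), Nat.mod_lt _ (by omega), ?_⟩
  have hq' : (q : ZMod (n1 * n2)) = g ^ s0 := by
    rw [← ZMod.natCast_mod, ← hs0, ZMod.natCast_mod, Nat.cast_pow]
  rw [← ZMod.natCast_eq_natCast_iff']
  push_cast [ZMod.natCast_mod, hq']
  rw [← pow_eq_pow_mod _ (natCast_pow_whitemanPeriod hco hgcd hg1 hg2), pow_add]
  ring

theorem coprime_of_mem_whitemanD (hg1 : orderOf (g : ZMod n1) = n1 - 1)
    (hg2 : orderOf (g : ZMod n2) = n2 - 1) (hx1 : x % n1 = g % n1) (hx2 : x % n2 = 1 % n2)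
    {i j : ℕ} (hi : i ∈ whitemanD n1 n2 g x j) : (n1 * n2).Coprime i := by
  obtain ⟨s, hs, rfl⟩ := mem_image.mp hi
  obtain ⟨hn1, hn2⟩ := one_lt_of_lt_whitemanPeriod (mem_range.mp hs)
  have hcop : ∀ m, 0 < orderOf (g : ZMod m) → IsUnit (x : ZMod m) →
      (g ^ s * x ^ j).Coprime m := fun m hg hx =>
    (((ZMod.isUnit_iff_coprime g m).mp (orderOf_pos_iff.mp hg).isUnit).pow_left s).mul_left
      (((ZMod.isUnit_iff_coprime x m).mp hx).pow_left j)
  rw [Nat.coprime_comm, ZMod.coprime_mod_iff_coprime]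
  refine Nat.Coprime.mul_right (hcop n1 (by omega) ?_) (hcop n2 (by omega) ?_)
  · rw [(ZMod.natCast_eq_natCast_iff' _ _ _).mpr hx1]
    exact (orderOf_pos_iff.mp (by omega)).isUnit
  · rw [(ZMod.natCast_eq_natCast_iff' x 1 n2).mpr hx2, Nat.cast_one]
    exact isUnit_one

theorem card_whitemanD (hgcd : Nat.gcd (n1 - 1) (n2 - 1) = 6)
    (hg1 : orderOf (g : ZMod n1) = n1 - 1) (hg2 : orderOf (g : ZMod n2) = n2 - 1)
    (hx1 : x % n1 = g % n1) (hx2 : x % n2 = 1 % n2) {j : ℕ} (hj : j < 6) :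
    #(whitemanD n1 n2 g x j) = (n1 - 1) * (n2 - 1) / 6 := by
  rw [whitemanD, card_image_of_injOn, card_range]
  intro s hs t ht h
  exact (eq_and_eq_of_pow_mul_pow_modEq hgcd hg1 hg2 hx1 hx2 (mem_range.mp hs) (mem_range.mp ht)
    hj hj h).1

theorem pairwiseDisjoint_whitemanD (hgcd : Nat.gcd (n1 - 1) (n2 - 1) = 6)
    (hg1 : orderOf (g : ZMod n1) = n1 - 1) (hg2 : orderOf (g : ZMod n2) = n2 - 1)
    (hx1 : x % n1 = g % n1) (hx2 : x % n2 = 1 % n2) :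
    (range 6 : Set ℕ).PairwiseDisjoint (whitemanD n1 n2 g x) := by
  intro j hj j' hj' hne
  refine disjoint_left.mpr fun i hi hi' => hne ?_
  obtain ⟨s, hs, rfl⟩ := mem_image.mp hi
  obtain ⟨t, ht, h⟩ := mem_image.mp hi'
  exact (eq_and_eq_of_pow_mul_pow_modEq hgcd hg1 hg2 hx1 hx2 (mem_range.mp ht)
    (mem_range.mp hs) (mem_range.mp hj') (mem_range.mp hj) h).2.symm

theorem biUnion_whitemanD (hp1 : n1.Prime) (hp2 : n2.Prime) (hne : n1 ≠ n2)
    (hgcd : Nat.gcd (n1 - 1) (n2 - 1) = 6)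
    (hg1 : orderOf (g : ZMod n1) = n1 - 1) (hg2 : orderOf (g : ZMod n2) = n2 - 1)
    (hx1 : x % n1 = g % n1) (hx2 : x % n2 = 1 % n2) :
    (range 6).biUnion (whitemanD n1 n2 g x) = {i ∈ range (n1 * n2) | (n1 * n2).Coprime i} := by
  refine eq_of_subset_of_card_le (fun i hi => ?_) ?_
  · obtain ⟨j, -, hi⟩ := mem_biUnion.mp hi
    exact mem_filter.mpr ⟨mem_range.mpr (lt_of_mem_whitemanD hi),
      coprime_of_mem_whitemanD hg1 hg2 hx1 hx2 hi⟩
  · have h6 : 6 ∣ (n1 - 1) * (n2 - 1) := hgcd ▸ (Nat.gcd_dvd_left _ _).mul_right _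
    rw [← Nat.totient_eq_card_coprime, Nat.totient_mul ((Nat.coprime_primes hp1 hp2).mpr hne),
      Nat.totient_prime hp1, Nat.totient_prime hp2,
      card_biUnion (pairwiseDisjoint_whitemanD hgcd hg1 hg2 hx1 hx2),
      sum_congr rfl fun j hj => card_whitemanD hgcd hg1 hg2 hx1 hx2 (mem_range.mp hj),
      sum_const, card_range, smul_eq_mul, Nat.mul_div_cancel' h6]

end Whiteman

theorem dj_coeffs_and_factorization_general
    (n1 n2 : ℕ) (hp1 : n1.Prime) (hp2 : n2.Prime) (hne : n1 ≠ n2)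
    (hgcd : Nat.gcd (n1 - 1) (n2 - 1) = 6)
    (g x : ℕ)
    (hg1 : orderOf (g : ZMod n1) = n1 - 1)
    (hg2 : orderOf (g : ZMod n2) = n2 - 1)
    (hx1 : x % n1 = g % n1) (hx2 : x % n2 = 1 % n2)
    (q : ℕ) (F K : Type*) [Field F] [Fintype F] (hcard : Fintype.card F = q)
    [Field K] [Algebra F K]
    (hq : Nat.Coprime q (n1 * n2))
    (hqmem : q % (n1 * n2) ∈ whitemanD n1 n2 g x 0)
    (β : K) (hβ : IsPrimitiveRoot β (n1 * n2)) :
    (∀ j < 6, ∀ k,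
      (∏ i ∈ whitemanD n1 n2 g x j, (X - C (β ^ i))).coeff k
        ∈ Set.range (algebraMap F K)) ∧
    (X - 1) * ((X : Polynomial K) ^ (n1 * n2) - 1) =
      ((X : Polynomial K) ^ n1 - 1) * ((X : Polynomial K) ^ n2 - 1) *
        ∏ j ∈ Finset.range 6, ∏ i ∈ whitemanD n1 n2 g x j, (X - C (β ^ i)) := by
  subst hcard
  have hco : n1.Coprime n2 := (Nat.coprime_primes hp1 hp2).mpr hne
  refine ⟨fun j _ k => ?_, ?_⟩
  · exact coeff_prod_X_sub_C_pow_mem_range F hβ.pow_eq_one hq (fun _ => lt_of_mem_whitemanD)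
      (fun _ => mul_mod_mem_whitemanD hco hgcd hg1 hg2 hqmem) k
  · rw [← prod_biUnion (pairwiseDisjoint_whitemanD hgcd hg1 hg2 hx1 hx2),
      biUnion_whitemanD hp1 hp2 hne hgcd hg1 hg2 hx1 hx2, ← hβ.cyclotomic_eq_prod_coprime]
    exact X_sub_one_mul_X_pow_mul_sub_one K hp1 hp2 hne

theorem dj_coeffs_and_factorization
    (n1 n2 : ℕ) (hp1 : n1.Prime) (hp2 : n2.Prime) (hne : n1 ≠ n2)
    (ho1 : Odd n1) (ho2 : Odd n2)
    (hgcd : Nat.gcd (n1 - 1) (n2 - 1) = 6)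
    (g x : ℕ)
    (hg1 : orderOf (g : ZMod n1) = n1 - 1)
    (hg2 : orderOf (g : ZMod n2) = n2 - 1)
    (hx1 : x % n1 = g % n1) (hx2 : x % n2 = 1 % n2)
    (q : ℕ) (F K : Type*) [Field F] [Fintype F] (hcard : Fintype.card F = q)
    [Field K] [Algebra F K]
    (hq : Nat.Coprime q (n1 * n2))
    (hqmem : q % (n1 * n2) ∈ whitemanD n1 n2 g x 0)
    (β : K) (hβ : IsPrimitiveRoot β (n1 * n2)) :
    (∀ j < 6, ∀ k,
      (∏ i ∈ whitemanD n1 n2 g x j, (X - C (β ^ i))).coeff k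
        ∈ Set.range (algebraMap F K)) ∧
    (X - 1) * ((X : Polynomial K) ^ (n1 * n2) - 1) =
      ((X : Polynomial K) ^ n1 - 1) * ((X : Polynomial K) ^ n2 - 1) *
        ∏ j ∈ Finset.range 6, ∏ i ∈ whitemanD n1 n2 g x j, (X - C (β ^ i)) :=
  dj_coeffs_and_factorization_general n1 n2 hp1 hp2 hne hgcd g x hg1 hg2 hx1 hx2 q F K hcard hq
    hqmem β hβ
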